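/- Let N ≥ 7 be an integer. Then γ₂ is strictly increasing on (0,1); more precisely, its derivative satisfies γ₂'(t) = (N−2)·(2t·(1−t²)^{-(N−1)} + 2·(√2)^{-(N−2)}·t^{-(N−1)} − 4t³·(t⁴+1)^{-N/2} + 2^{-(N−2)}·t^{-(N−1)} − 2t·(t²+1)^{-(N−1)}) > 0 for every t ∈ (0,1). -/
import Mathlib


open Real Filter Set

/-- `γ₂(t) = (1−t²)^{-(N−2)} − 2·(√2·t)^{-(N−2)} + 2·(t⁴+1)^{-(N−2)/2} − (2t)^{-(N−2)} + (t²+1)^{-(N−2)}`. -/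
noncomputable def gamma2 (N : ℕ) (t : ℝ) : ℝ :=
  (1 - t ^ 2) ^ (-((N : ℝ) - 2)) - 2 * (Real.sqrt 2 * t) ^ (-((N : ℝ) - 2)) +
    2 * (t ^ 4 + 1) ^ (-((N : ℝ) - 2) / 2) - (2 * t) ^ (-((N : ℝ) - 2)) +
    (t ^ 2 + 1) ^ (-((N : ℝ) - 2))

theorem stmt_6 (N : ℕ) (hN : 7 ≤ N) :
    StrictMonoOn (gamma2 N) (Ioo (0 : ℝ) 1) ∧
    ∀ t ∈ Ioo (0 : ℝ) 1,
      deriv (gamma2 N) t =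
        ((N : ℝ) - 2) * (2 * t * (1 - t ^ 2) ^ (-((N : ℝ) - 1)) +
          2 * (Real.sqrt 2) ^ (-((N : ℝ) - 2)) * t ^ (-((N : ℝ) - 1)) -
          4 * t ^ 3 * (t ^ 4 + 1) ^ (-(N : ℝ) / 2) +
          (2 : ℝ) ^ (-((N : ℝ) - 2)) * t ^ (-((N : ℝ) - 1)) -
          2 * t * (t ^ 2 + 1) ^ (-((N : ℝ) - 1))) ∧
      0 < ((N : ℝ) - 2) * (2 * t * (1 - t ^ 2) ^ (-((N : ℝ) - 1)) +
          2 * (Real.sqrt 2) ^ (-((N : ℝ) - 2)) * t ^ (-((N : ℝ) - 1)) -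
          4 * t ^ 3 * (t ^ 4 + 1) ^ (-(N : ℝ) / 2) +
          (2 : ℝ) ^ (-((N : ℝ) - 2)) * t ^ (-((N : ℝ) - 1)) -
          2 * t * (t ^ 2 + 1) ^ (-((N : ℝ) - 1))) := by
  have hN7 : (7 : ℝ) ≤ (N : ℝ) := by exact_mod_cast hN
  have hS : (0 : ℝ) < Real.sqrt 2 := Real.sqrt_pos.mpr (by norm_num)
  have hS2 : Real.sqrt 2 ^ (2 : ℝ) = 2 := by
    rw [show (2 : ℝ) = ((2 : ℕ) : ℝ) by norm_num, Real.rpow_natCast]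
    exact Real.sq_sqrt (by norm_num)
  have hsadd : Real.sqrt 2 * Real.sqrt 2 ^ (-((N : ℝ) - 1)) =
      Real.sqrt 2 ^ (-((N : ℝ) - 2)) := by
    rw [show (-((N : ℝ) - 2)) = 1 + -((N : ℝ) - 1) by ring, Real.rpow_add hS,
      Real.rpow_one]
  have h2add : (2 : ℝ) * (2 : ℝ) ^ (-((N : ℝ) - 1)) = (2 : ℝ) ^ (-((N : ℝ) - 2)) := by
    rw [show (-((N : ℝ) - 2)) = 1 + -((N : ℝ) - 1) by ring,
      Real.rpow_add (by norm_num : (0:ℝ) < 2), Real.rpow_one]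
  -- the derivative
  have key : ∀ t ∈ Ioo (0 : ℝ) 1, HasDerivAt (gamma2 N)
      (((N : ℝ) - 2) * (2 * t * (1 - t ^ 2) ^ (-((N : ℝ) - 1)) +
        2 * (Real.sqrt 2) ^ (-((N : ℝ) - 2)) * t ^ (-((N : ℝ) - 1)) -
        4 * t ^ 3 * (t ^ 4 + 1) ^ (-(N : ℝ) / 2) +
        (2 : ℝ) ^ (-((N : ℝ) - 2)) * t ^ (-((N : ℝ) - 1)) -
        2 * t * (t ^ 2 + 1) ^ (-((N : ℝ) - 1)))) t := by
    rintro t ⟨ht0, ht1⟩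
    have h1t : (0 : ℝ) < 1 - t ^ 2 := by nlinarith
    have d1 : HasDerivAt (fun t : ℝ => (1 - t ^ 2) ^ (-((N : ℝ) - 2)))
        ((-(2 * t)) * (-((N : ℝ) - 2)) * (1 - t ^ 2) ^ (-((N : ℝ) - 2) - 1)) t := by
      have h : HasDerivAt (fun t : ℝ => 1 - t ^ 2) (-(2 * t)) t := by
        simpa using (hasDerivAt_pow 2 t).const_sub 1
      exact h.rpow_const (Or.inl (ne_of_gt h1t))
    have d2 : HasDerivAt (fun t : ℝ => (Real.sqrt 2 * t) ^ (-((N : ℝ) - 2)))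
        (Real.sqrt 2 * (-((N : ℝ) - 2)) * (Real.sqrt 2 * t) ^ (-((N : ℝ) - 2) - 1)) t := by
      have h : HasDerivAt (fun t : ℝ => Real.sqrt 2 * t) (Real.sqrt 2) t := by
        simpa using (hasDerivAt_id t).const_mul (Real.sqrt 2)
      exact h.rpow_const (Or.inl (by positivity))
    have d3 : HasDerivAt (fun t : ℝ => (t ^ 4 + 1) ^ (-((N : ℝ) - 2) / 2))
        ((4 * t ^ 3) * (-((N : ℝ) - 2) / 2) * (t ^ 4 + 1) ^ (-((N : ℝ) - 2) / 2 - 1)) t := by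
      have h : HasDerivAt (fun t : ℝ => t ^ 4 + 1) (4 * t ^ 3) t := by
        simpa using (hasDerivAt_pow 4 t).add_const 1
      exact h.rpow_const (Or.inl (by positivity))
    have d4 : HasDerivAt (fun t : ℝ => (2 * t) ^ (-((N : ℝ) - 2)))
        ((2 : ℝ) * (-((N : ℝ) - 2)) * (2 * t) ^ (-((N : ℝ) - 2) - 1)) t := by
      have h : HasDerivAt (fun t : ℝ => 2 * t) (2 : ℝ) t := by
        simpa using (hasDerivAt_id t).const_mul (2 : ℝ)
      exact h.rpow_const (Or.inl (by positivity))
    have d5 : HasDerivAt (fun t : ℝ => (t ^ 2 + 1) ^ (-((N : ℝ) - 2)))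
        ((2 * t) * (-((N : ℝ) - 2)) * (t ^ 2 + 1) ^ (-((N : ℝ) - 2) - 1)) t := by
      have h : HasDerivAt (fun t : ℝ => t ^ 2 + 1) (2 * t) t := by
        simpa using (hasDerivAt_pow 2 t).add_const 1
      exact h.rpow_const (Or.inl (by positivity))
    have dtot := (((d1.sub (d2.const_mul 2)).add (d3.const_mul 2)).sub d4).add d5
    have heq : ((-(2 * t)) * (-((N : ℝ) - 2)) * (1 - t ^ 2) ^ (-((N : ℝ) - 2) - 1) -
        2 * (Real.sqrt 2 * (-((N : ℝ) - 2)) * (Real.sqrt 2 * t) ^ (-((N : ℝ) - 2) - 1)) +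
        2 * ((4 * t ^ 3) * (-((N : ℝ) - 2) / 2) * (t ^ 4 + 1) ^ (-((N : ℝ) - 2) / 2 - 1)) -
        (2 : ℝ) * (-((N : ℝ) - 2)) * (2 * t) ^ (-((N : ℝ) - 2) - 1) +
        (2 * t) * (-((N : ℝ) - 2)) * (t ^ 2 + 1) ^ (-((N : ℝ) - 2) - 1)) =
        (((N : ℝ) - 2) * (2 * t * (1 - t ^ 2) ^ (-((N : ℝ) - 1)) +
          2 * (Real.sqrt 2) ^ (-((N : ℝ) - 2)) * t ^ (-((N : ℝ) - 1)) -
          4 * t ^ 3 * (t ^ 4 + 1) ^ (-(N : ℝ) / 2) +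
          (2 : ℝ) ^ (-((N : ℝ) - 2)) * t ^ (-((N : ℝ) - 1)) -
          2 * t * (t ^ 2 + 1) ^ (-((N : ℝ) - 1)))) := by
      rw [show (-((N : ℝ) - 2) - 1) = -((N : ℝ) - 1) by ring,
        show (-((N : ℝ) - 2) / 2 - 1) = -(N : ℝ) / 2 by ring,
        Real.mul_rpow (Real.sqrt_nonneg 2) ht0.le,
        Real.mul_rpow (by norm_num : (0:ℝ) ≤ 2) ht0.le, ← hsadd, ← h2add]
      ring
    rw [heq] at dtot
    exact dtot
  -- positivity of the derivative expression
  have pos : ∀ t ∈ Ioo (0 : ℝ) 1,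
      0 < ((N : ℝ) - 2) * (2 * t * (1 - t ^ 2) ^ (-((N : ℝ) - 1)) +
        2 * (Real.sqrt 2) ^ (-((N : ℝ) - 2)) * t ^ (-((N : ℝ) - 1)) -
        4 * t ^ 3 * (t ^ 4 + 1) ^ (-(N : ℝ) / 2) +
        (2 : ℝ) ^ (-((N : ℝ) - 2)) * t ^ (-((N : ℝ) - 1)) -
        2 * t * (t ^ 2 + 1) ^ (-((N : ℝ) - 1))) := by
    rintro t ⟨ht0, ht1⟩
    have h1t : (0 : ℝ) < 1 - t ^ 2 := by nlinarith
    have hA : 2 * t * (t ^ 2 + 1) ^ (-((N : ℝ) - 1)) <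
        2 * t * (1 - t ^ 2) ^ (-((N : ℝ) - 1)) := by
      apply mul_lt_mul_of_pos_left _ (by positivity : (0:ℝ) < 2 * t)
      exact Real.rpow_lt_rpow_of_neg h1t (by nlinarith) (by linarith)
    have e1 : (t ^ 4 + 1 : ℝ) ^ (-(N : ℝ) / 2) < (2 * t ^ 2) ^ (-(N : ℝ) / 2) := by
      refine Real.rpow_lt_rpow_of_neg (by positivity) (by nlinarith [mul_pos h1t h1t])
        (by linarith)
    have hSN : Real.sqrt 2 ^ (-(N : ℝ)) = (2 : ℝ) ^ (-(N : ℝ) / 2) := by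
      rw [show Real.sqrt 2 = (2 : ℝ) ^ (1/2 : ℝ) from Real.sqrt_eq_rpow 2,
        ← Real.rpow_mul (by norm_num : (0:ℝ) ≤ 2),
        show (1/2 : ℝ) * (-(N : ℝ)) = -(N : ℝ) / 2 by ring]
    have e2 : (2 * t ^ 2 : ℝ) ^ (-(N : ℝ) / 2) =
        Real.sqrt 2 ^ (-(N : ℝ)) * t ^ (-(N : ℝ)) := by
      rw [Real.mul_rpow (by norm_num : (0:ℝ) ≤ 2) (by positivity), hSN]
      congr 1
      rw [← Real.rpow_natCast t 2, ← Real.rpow_mul ht0.le]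
      congr 1
      push_cast
      ring
    have e3 : t ^ (3 : ℕ) * t ^ (-(N : ℝ)) = t ^ (-((N : ℝ) - 3)) := by
      rw [← Real.rpow_natCast t 3, ← Real.rpow_add ht0]
      congr 1
      push_cast
      ring
    have e4 : t ^ (-((N : ℝ) - 3)) ≤ t ^ (-((N : ℝ) - 1)) :=
      Real.rpow_le_rpow_of_exponent_ge ht0 ht1.le (by linarith)
    have e5 : 2 * Real.sqrt 2 ^ (-((N : ℝ) - 2)) = 4 * Real.sqrt 2 ^ (-(N : ℝ)) := by
      rw [show (-((N : ℝ) - 2)) = 2 + -(N : ℝ) by ring, Real.rpow_add hS, hS2]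
      ring
    have hC : 4 * t ^ 3 * (t ^ 4 + 1) ^ (-(N : ℝ) / 2) <
        2 * Real.sqrt 2 ^ (-((N : ℝ) - 2)) * t ^ (-((N : ℝ) - 1)) := by
      have step1 : 4 * t ^ 3 * (t ^ 4 + 1) ^ (-(N : ℝ) / 2) <
          4 * t ^ 3 * ((2 * t ^ 2) ^ (-(N : ℝ) / 2)) :=
        mul_lt_mul_of_pos_left e1 (by positivity)
      have step2 : 4 * t ^ 3 * ((2 * t ^ 2) ^ (-(N : ℝ) / 2)) =
          4 * Real.sqrt 2 ^ (-(N : ℝ)) * t ^ (-((N : ℝ) - 3)) := by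
        rw [e2, ← e3]; ring
      have step3 : 4 * Real.sqrt 2 ^ (-(N : ℝ)) * t ^ (-((N : ℝ) - 3)) ≤
          4 * Real.sqrt 2 ^ (-(N : ℝ)) * t ^ (-((N : ℝ) - 1)) := by
        apply mul_le_mul_of_nonneg_left e4 (by positivity)
      have step4 : 4 * Real.sqrt 2 ^ (-(N : ℝ)) * t ^ (-((N : ℝ) - 1)) =
          2 * Real.sqrt 2 ^ (-((N : ℝ) - 2)) * t ^ (-((N : ℝ) - 1)) := by
        rw [e5]
      linarith
    have hD : (0 : ℝ) < (2 : ℝ) ^ (-((N : ℝ) - 2)) * t ^ (-((N : ℝ) - 1)) := by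
      positivity
    have hNpos : (0 : ℝ) < (N : ℝ) - 2 := by linarith
    apply mul_pos hNpos
    linarith
  refine ⟨?_, fun t ht => ⟨(key t ht).deriv, pos t ht⟩⟩
  apply strictMonoOn_of_deriv_pos (convex_Ioo (0:ℝ) 1)
  · exact fun x hx => ((key x hx).differentiableAt).continuousAt.continuousWithinAt
  · intro x hx
    rw [interior_Ioo] at hx
    rw [(key x hx).deriv]
    exact pos x hx
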